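/- For ℓ : ℕ, let L_ℓ, σ_ℓ, and the structures M_α (for α : Fin ℓ → Bool) be as in the context. Then for every L_ℓ-sentence Φ: (for every α : Fin ℓ → Bool, M_α ⊨ Φ) if and only if (for every nonempty L_ℓ-structure M with M ⊨ σ_ℓ, also M ⊨ Φ). In particular, a quantified Boolean formula whose leading block is universally quantified is true iff the prenex sentence encoding its remaining quantifiers and matrix holds in all models of σ_ℓ. (This is the semantic core—claims C1 and C2 combined—of the reduction from QBF to GFODD Equivalence in the paper's Theorem 8.) -/

import Mathlib

open FirstOrder Language Structure

/-- The relation symbols of the language with unary relations `P_T, P_1, …, P_ℓ`. -/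
inductive LRel (ℓ : ℕ) : ℕ → Type
  | PT : LRel ℓ 1
  | Px : Fin ℓ → LRel ℓ 1

/-- The first-order language with unary relation symbols `P_T, P_1, …, P_ℓ` and no other
symbols. -/
def Lℓ (ℓ : ℕ) : FirstOrder.Language := ⟨fun _ => Empty, LRel ℓ⟩

/-- The atom `R x_i` for a unary relation symbol `R`. -/
def unaryAtom {ℓ n : ℕ} (R : (Lℓ ℓ).Relations 1) (i : Fin n) : (Lℓ ℓ).BoundedFormula Empty n :=
  R.boundedFormula₁ (Term.var (Sum.inr i))

/-- The atom `x_i = x_j`. -/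
def eqAtom {L : FirstOrder.Language} {n : ℕ} (i j : Fin n) : L.BoundedFormula Empty n :=
  Term.bdEqual (Term.var (Sum.inr i)) (Term.var (Sum.inr j))

/-- Conjunction of a list of bounded formulas. -/
def listConj {L : FirstOrder.Language} {n : ℕ} (l : List (L.BoundedFormula Empty n)) :
    L.BoundedFormula Empty n :=
  l.foldr (· ⊓ ·) ⊤

/-- The sentence
`∃y₁∃y₂∀z₁∀z₂∀z₃ [¬(P_T y₁ ↔ P_T y₂) ∧ ⋀ᵢ (P_i y₁ ↔ P_i y₂) ∧ (z₁ = z₂ ∨ z₁ = z₃ ∨ z₂ = z₃)]`. -/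
def sigmaL (ℓ : ℕ) : (Lℓ ℓ).Sentence :=
  ((∼((unaryAtom LRel.PT (0 : Fin 5)).iff (unaryAtom LRel.PT 1)) ⊓
      listConj ((List.finRange ℓ).map fun i =>
        (unaryAtom (LRel.Px i) (0 : Fin 5)).iff (unaryAtom (LRel.Px i) 1)) ⊓
      (eqAtom (2 : Fin 5) 3 ⊔ eqAtom (2 : Fin 5) 4 ⊔ eqAtom (3 : Fin 5) 4)).all.all.all).ex.ex

/-- The structure `M_α` on `Bool`: `P_T` holds of exactly `true`, and `P_i` holds of every
element if `α i = true` and of no element if `α i = false`. -/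
def Mα (ℓ : ℕ) (α : Fin ℓ → Bool) : (Lℓ ℓ).Structure Bool where
  funMap := fun {_} f _ => Empty.elim f
  RelMap
    | .PT => fun x => x 0 = true
    | .Px i => fun _ => α i = true

lemma realize_listConj {L : FirstOrder.Language} {M : Type*} [L.Structure M] {n : ℕ}
    (l : List (L.BoundedFormula Empty n)) {v : Empty → M} {xs : Fin n → M} :
    (listConj l).Realize v xs ↔ ∀ φ ∈ l, φ.Realize v xs := by
  induction l with
  | nil => simp [listConj]
  | cons a t ih =>
    have e : listConj (a :: t) = a ⊓ listConj t := rfl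
    rw [e, BoundedFormula.realize_inf, ih]
    constructor
    · rintro ⟨h1, h2⟩ φ hφ
      rcases List.mem_cons.1 hφ with rfl | hφ
      · exact h1
      · exact h2 φ hφ
    · intro h
      exact ⟨h a List.mem_cons_self, fun φ hφ => h φ (List.mem_cons_of_mem a hφ)⟩

lemma realize_PT {ℓ n : ℕ} {M : Type*} [(Lℓ ℓ).Structure M] {v : Empty → M} {xs : Fin n → M}
    {t : (Lℓ ℓ).Term (Empty ⊕ Fin n)} :
    (Relations.boundedFormula₁ (L := Lℓ ℓ) LRel.PT t).Realize v xs ↔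
      RelMap (L := Lℓ ℓ) LRel.PT ![t.realize (Sum.elim v xs)] :=
  BoundedFormula.realize_rel₁

lemma realize_Px {ℓ n : ℕ} {M : Type*} [(Lℓ ℓ).Structure M] {v : Empty → M} {xs : Fin n → M}
    {t : (Lℓ ℓ).Term (Empty ⊕ Fin n)} {i : Fin ℓ} :
    (Relations.boundedFormula₁ (L := Lℓ ℓ) (LRel.Px i) t).Realize v xs ↔
      RelMap (L := Lℓ ℓ) (LRel.Px i) ![t.realize (Sum.elim v xs)] :=
  BoundedFormula.realize_rel₁

lemma realize_sigmaL (ℓ : ℕ) {M : Type} [inst : (Lℓ ℓ).Structure M] :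
    (sigmaL ℓ).Realize M ↔ ∃ y1 y2 : M,
      (¬(@RelMap (Lℓ ℓ) M inst 1 LRel.PT ![y1] ↔ @RelMap (Lℓ ℓ) M inst 1 LRel.PT ![y2])) ∧
      (∀ i : Fin ℓ, @RelMap (Lℓ ℓ) M inst 1 (LRel.Px i) ![y1] ↔ @RelMap (Lℓ ℓ) M inst 1 (LRel.Px i) ![y2]) ∧
      (∀ z1 z2 z3 : M, z1 = z2 ∨ z1 = z3 ∨ z2 = z3) := by
  simp only [sigmaL, Sentence.Realize, Formula.Realize, BoundedFormula.realize_ex,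
    BoundedFormula.realize_all, BoundedFormula.realize_inf, BoundedFormula.realize_sup,
    BoundedFormula.realize_not, BoundedFormula.realize_iff, unaryAtom, eqAtom,
    BoundedFormula.realize_rel₁, realize_PT, realize_Px, Term.realize_var, realize_listConj, List.mem_map,
    List.mem_finRange, BoundedFormula.realize_bdEqual, Sum.elim_inr, true_and]
  constructor
  · rintro ⟨y1, y2, h⟩
    refine ⟨y1, y2, (h y1 y1 y1).1.1, fun i => ?_, fun z1 z2 z3 => or_assoc.mp (h z1 z2 z3).2⟩
    have := (h y1 y1 y1).1.2 _ ⟨i, rfl⟩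
    simp only [unaryAtom, BoundedFormula.realize_iff, BoundedFormula.realize_rel₁, realize_PT, realize_Px,
      Term.realize_var, Sum.elim_inr] at this
    exact this
  · rintro ⟨y1, y2, h1, h2, h3⟩
    refine ⟨y1, y2, fun z1 z2 z3 => ⟨⟨h1, fun φ hφ => ?_⟩, or_assoc.mpr (h3 z1 z2 z3)⟩⟩
    obtain ⟨i, rfl⟩ := hφ
    simp only [unaryAtom, BoundedFormula.realize_iff, BoundedFormula.realize_rel₁, realize_PT, realize_Px,
      Term.realize_var, Sum.elim_inr]
    exact h2 i

lemma key_transfer (ℓ : ℕ) (Φ : (Lℓ ℓ).Sentence) (M : Type) (instM : (Lℓ ℓ).Structure M)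
    (a b : M)
    (ha : @RelMap (Lℓ ℓ) M instM 1 LRel.PT ![a])
    (hb : ¬ @RelMap (Lℓ ℓ) M instM 1 LRel.PT ![b])
    (hPx : ∀ i : Fin ℓ, @RelMap (Lℓ ℓ) M instM 1 (LRel.Px i) ![a] ↔
      @RelMap (Lℓ ℓ) M instM 1 (LRel.Px i) ![b])
    (hcover : ∀ m : M, m = a ∨ m = b)
    (h : ∀ α : Fin ℓ → Bool, @Sentence.Realize (Lℓ ℓ) Bool (Mα ℓ α) Φ) :
    @Sentence.Realize (Lℓ ℓ) M instM Φ := by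
  letI := instM
  classical
  set α : Fin ℓ → Bool := fun i => if @RelMap (Lℓ ℓ) M instM 1 (LRel.Px i) ![a] then true else false with hα
  letI instB : (Lℓ ℓ).Structure Bool := Mα ℓ α
  have hab : a ≠ b := fun e => hb (e ▸ ha)
  let f : Bool → M := fun x => if x then a else b
  have hf : Function.Bijective f := by
    constructor
    · intro x y hxy
      cases x <;> cases y <;> simp [f] at hxy
      · rfl
      · exact absurd hxy.symm hab
      · exact absurd hxy hab
      · rfl
    · intro m
      rcases hcover m with rfl | rfl
      · exact ⟨true, rfl⟩
      · exact ⟨false, rfl⟩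
  have hcomp : ∀ (x : Fin 1 → Bool), f ∘ x = ![f (x 0)] := by
    intro x
    funext j
    fin_cases j
    rfl
  let g : Bool ≃[Lℓ ℓ] M :=
    { toEquiv := Equiv.ofBijective f hf
      map_fun' := fun {n} F _ => Empty.elim F
      map_rel' := by
        intro n r x
        cases r with
        | PT =>
          show @RelMap (Lℓ ℓ) M instM 1 LRel.PT (f ∘ x) ↔ (x 0 = true)
          rw [hcomp]
          cases hx : x 0 <;> simp [f, ha]
          exact hb
        | Px i =>
          show @RelMap (Lℓ ℓ) M instM 1 (LRel.Px i) (f ∘ x) ↔ (α i = true)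
          rw [hcomp]
          have h2 : @RelMap (Lℓ ℓ) M instM 1 (LRel.Px i) ![f (x 0)] ↔ @RelMap (Lℓ ℓ) M instM 1 (LRel.Px i) ![a] := by
            cases hx : x 0 <;> simp [f]
            exact (hPx i).symm
          rw [h2, hα]
          by_cases hA : @RelMap (Lℓ ℓ) M instM 1 (LRel.Px i) ![a] <;> simp [hA] }
  exact (StrongHomClass.realize_sentence g Φ).1 (h α)

/-- **Semantic core of the QBF reduction in Theorem 8 (claims C1 and C2 combined).**
A sentence `Φ` holds in all the Boolean structures `M_α` iff it holds in every nonempty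
model of `σ_ℓ`. -/
theorem forall_Mα_iff_forall_models_sigmaL (ℓ : ℕ) (Φ : (Lℓ ℓ).Sentence) :
    (∀ α : Fin ℓ → Bool, @Sentence.Realize (Lℓ ℓ) Bool (Mα ℓ α) Φ) ↔
      (∀ (M : Type) (instM : (Lℓ ℓ).Structure M), Nonempty M →
        @Sentence.Realize (Lℓ ℓ) M instM (sigmaL ℓ) →
        @Sentence.Realize (Lℓ ℓ) M instM Φ) := by
  constructor
  · intro h M instM _ hσ
    letI := instM
    obtain ⟨y1, y2, hPT, hPx, hsize⟩ := (realize_sigmaL ℓ).1 hσ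
    by_cases hT : @RelMap (Lℓ ℓ) M instM 1 LRel.PT ![y1]
    · have hT2 : ¬ @RelMap (Lℓ ℓ) M instM 1 LRel.PT ![y2] := fun h2 => hPT (iff_of_true hT h2)
      exact key_transfer ℓ Φ M instM y1 y2 hT hT2 hPx
        (fun m => by rcases hsize y1 y2 m with h' | h' | h'
                     · exact absurd h' (fun e => hPT (iff_of_eq (by rw [e])))
                     · exact Or.inl h'.symm
                     · exact Or.inr h'.symm) h
    · have hT2 : @RelMap (Lℓ ℓ) M instM 1 LRel.PT ![y2] := by
        by_contra h2
        exact hPT (iff_of_false hT h2)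
      exact key_transfer ℓ Φ M instM y2 y1 hT2 hT (fun i => (hPx i).symm)
        (fun m => by rcases hsize y1 y2 m with h' | h' | h'
                     · exact absurd h' (fun e => hPT (iff_of_eq (by rw [e])))
                     · exact Or.inr h'.symm
                     · exact Or.inl h'.symm) h
  · intro h α
    letI := Mα ℓ α
    refine h Bool (Mα ℓ α) ⟨true⟩ ((realize_sigmaL ℓ).2 ⟨true, false, ?_, fun i => Iff.rfl, ?_⟩)
    · intro hh
      have : (true = true) ↔ (false = true) := hh
      simp at this
    · intro z1 z2 z3
      cases z1 <;> cases z2 <;> cases z3 <;> simp
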